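/- With the non-simply laced Cartan data of the context, for all families m, n of nonnegative integers on J_k one has the telescoped form of the restricted quadratic form: Q_k(m,n) = (1/2) Σ_{j=1}^{k} [ M°_j · (C° M°_j − 2 N°_j) + Σ_{i=t_0(j−1)+1}^{t_0 j} ( M•_i · (C• M•_i − 2 N•_i) + 2 M°_j · D M•_i ) ], where M_{α,i} = Σ_{j=i}^{t_α k} m_{α,j} and N_{α,i} = Σ_{j=i}^{t_α k} n_{α,j} are the tail partial sums, M°_j = (M_{α,j})_{α∈Π_○}, M•_i = (M_{α,i})_{α∈Π_•}, and similarly for N°_j, N•_i. -/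
import Mathlib


open Finset

/-- The restricted quadratic form
`Q_k(m,n) = (1/2) Σ_{(α,i),(β,j)∈J_k} (C_{αβ}/t_α) min(t_α j, t_β i) m_{α,i} m_{β,j}
− Σ_α Σ_{i,j=1}^{t_α k} min(i,j) m_{α,i} n_{α,j}`. -/
def Qk (r : ℕ) (C : Fin r → Fin r → ℤ) (t : Fin r → ℕ) (k : ℕ)
    (m n : Fin r → ℕ → ℕ) : ℚ :=
  (1 / 2) * (∑ α, ∑ β, ∑ i ∈ Icc 1 (t α * k), ∑ j ∈ Icc 1 (t β * k),
      (C α β : ℚ) / (t α : ℚ) * ((min (t α * j) (t β * i) : ℕ) : ℚ)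
        * (m α i : ℚ) * (m β j : ℚ))
    - ∑ α, ∑ i ∈ Icc 1 (t α * k), ∑ j ∈ Icc 1 (t α * k),
        ((min i j : ℕ) : ℚ) * (m α i : ℚ) * (n α j : ℚ)

/-- Tail partial sums `M_{α,i} = Σ_{j=i}^{t_α k} m_{α,j}`. -/
def tailSum (r : ℕ) (t : Fin r → ℕ) (k : ℕ) (m : Fin r → ℕ → ℕ)
    (α : Fin r) (i : ℕ) : ℚ :=
  ∑ j ∈ Icc i (t α * k), (m α j : ℚ)


lemma sum_ite_le (K c : ℕ) (hc : 1 ≤ c) (f : ℕ → ℚ) :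
    ∑ i ∈ Icc 1 K, (if c ≤ i then f i else 0) = ∑ i ∈ Icc c K, f i := by
  rw [← Finset.sum_filter]
  congr 1
  ext x
  simp only [mem_filter, mem_Icc]
  omega

lemma div_succ_le_iff (b l i : ℕ) (hb : 0 < b) (hl : 1 ≤ l) :
    (l - 1) / b + 1 ≤ i ↔ l ≤ b * i := by
  rw [Nat.add_one_le_iff, Nat.div_lt_iff_lt_mul hb, mul_comm i b]
  omega

lemma sum_indicator (N c : ℕ) (hc : c ≤ N) :
    ∑ l ∈ Icc 1 N, (if l ≤ c then (1 : ℚ) else 0) = c := by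
  rw [Finset.sum_boole]
  have h : (Icc 1 N).filter (fun l => l ≤ c) = Icc 1 c := by
    ext x; simp only [mem_filter, mem_Icc]; omega
  rw [h]
  simp [Nat.card_Icc]

lemma min_eq_sum (a b k i j : ℕ) (ha : 0 < a) (hb : 0 < b)
    (hi : i ∈ Icc 1 (a * k)) (hj : j ∈ Icc 1 (b * k)) :
    ((min (a * j) (b * i) : ℕ) : ℚ)
      = ∑ l ∈ Icc 1 (a * (b * k)),
          (if (l - 1) / b + 1 ≤ i then (1 : ℚ) else 0)
            * (if (l - 1) / a + 1 ≤ j then (1 : ℚ) else 0) := by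
  simp only [mem_Icc] at hi hj
  have key : ∀ l ∈ Icc 1 (a * (b * k)),
      (if (l - 1) / b + 1 ≤ i then (1 : ℚ) else 0)
        * (if (l - 1) / a + 1 ≤ j then (1 : ℚ) else 0)
      = if l ≤ min (a * j) (b * i) then (1 : ℚ) else 0 := by
    intro l hl
    simp only [mem_Icc] at hl
    have e1 := div_succ_le_iff b l i hb hl.1
    have e2 := div_succ_le_iff a l j ha hl.1
    by_cases h1 : l ≤ b * i <;> by_cases h2 : l ≤ a * j <;>
      simp [e1, e2, h1, h2, le_min_iff]
  rw [Finset.sum_congr rfl key, sum_indicator]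
  have : min (a * j) (b * i) ≤ a * (b * k) :=
    le_trans (min_le_left _ _) (Nat.mul_le_mul_left a hj.2)
  exact this

lemma min_double_sum (a b k : ℕ) (ha : 0 < a) (hb : 0 < b) (f g : ℕ → ℚ) :
    ∑ i ∈ Icc 1 (a * k), ∑ j ∈ Icc 1 (b * k),
        ((min (a * j) (b * i) : ℕ) : ℚ) * f i * g j
      = ∑ l ∈ Icc 1 (a * (b * k)),
          (∑ i ∈ Icc ((l - 1) / b + 1) (a * k), f i)
            * (∑ j ∈ Icc ((l - 1) / a + 1) (b * k), g j) := by
  have step1 : ∀ i ∈ Icc 1 (a * k), ∀ j ∈ Icc 1 (b * k),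
      ((min (a * j) (b * i) : ℕ) : ℚ) * f i * g j
        = ∑ l ∈ Icc 1 (a * (b * k)),
            (if (l - 1) / b + 1 ≤ i then f i else 0)
              * (if (l - 1) / a + 1 ≤ j then g j else 0) := by
    intro i hi j hj
    rw [min_eq_sum a b k i j ha hb hi hj, Finset.sum_mul, Finset.sum_mul]
    apply Finset.sum_congr rfl
    intro l _
    split_ifs <;> ring
  calc ∑ i ∈ Icc 1 (a * k), ∑ j ∈ Icc 1 (b * k),
        ((min (a * j) (b * i) : ℕ) : ℚ) * f i * g j
      = ∑ i ∈ Icc 1 (a * k), ∑ j ∈ Icc 1 (b * k), ∑ l ∈ Icc 1 (a * (b * k)),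
            (if (l - 1) / b + 1 ≤ i then f i else 0)
              * (if (l - 1) / a + 1 ≤ j then g j else 0) := by
        exact Finset.sum_congr rfl fun i hi => Finset.sum_congr rfl fun j hj => step1 i hi j hj
    _ = ∑ i ∈ Icc 1 (a * k), ∑ l ∈ Icc 1 (a * (b * k)), ∑ j ∈ Icc 1 (b * k),
            (if (l - 1) / b + 1 ≤ i then f i else 0)
              * (if (l - 1) / a + 1 ≤ j then g j else 0) :=
        Finset.sum_congr rfl fun i _ => Finset.sum_comm
    _ = ∑ l ∈ Icc 1 (a * (b * k)), ∑ i ∈ Icc 1 (a * k), ∑ j ∈ Icc 1 (b * k),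
            (if (l - 1) / b + 1 ≤ i then f i else 0)
              * (if (l - 1) / a + 1 ≤ j then g j else 0) :=
        Finset.sum_comm
    _ = ∑ l ∈ Icc 1 (a * (b * k)),
          (∑ i ∈ Icc ((l - 1) / b + 1) (a * k), f i)
            * (∑ j ∈ Icc ((l - 1) / a + 1) (b * k), g j) := by
        apply Finset.sum_congr rfl
        intro l _
        rw [← sum_ite_le (a * k) ((l - 1) / b + 1) (Nat.succ_le_succ (Nat.zero_le _)) f,
            ← sum_ite_le (b * k) ((l - 1) / a + 1) (Nat.succ_le_succ (Nat.zero_le _)) g,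
            Finset.sum_mul_sum]

lemma sum_blocks (t0 k : ℕ) (F : ℕ → ℚ) :
    ∑ l ∈ Icc 1 (t0 * k), F l
      = ∑ j ∈ Icc 1 k, ∑ l ∈ Icc (t0 * (j - 1) + 1) (t0 * j), F l := by
  induction k with
  | zero => simp
  | succ k ih =>
    rw [Finset.sum_Icc_succ_top (by omega : 1 ≤ k + 1)]
    simp only [Nat.add_sub_cancel]
    rw [← ih]
    have e1 : Icc 1 (t0 * (k + 1)) = Ioc 0 (t0 * (k + 1)) := (Finset.Icc_add_one_left_eq_Ioc 0 _)
    have e2 : Icc 1 (t0 * k) = Ioc 0 (t0 * k) := (Finset.Icc_add_one_left_eq_Ioc 0 _)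
    have e3 : Icc (t0 * k + 1) (t0 * (k + 1)) = Ioc (t0 * k) (t0 * (k + 1)) :=
      (Finset.Icc_add_one_left_eq_Ioc _ _)
    rw [e1, e2, e3]
    exact (Finset.sum_Ioc_consecutive F (Nat.zero_le _)
      (Nat.mul_le_mul_left t0 (Nat.le_succ k))).symm

lemma div_in_block (t0 j l : ℕ) (hj : 1 ≤ j)
    (hl : l ∈ Icc (t0 * (j - 1) + 1) (t0 * j)) : (l - 1) / t0 + 1 = j := by
  simp only [mem_Icc] at hl
  have h1 : (j - 1) * t0 ≤ l - 1 := by rw [mul_comm]; omega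
  have h2 : l - 1 < ((j - 1) + 1) * t0 := by
    have e : (j - 1) + 1 = j := by omega
    rw [e, mul_comm]; omega
  have := Nat.div_eq_of_lt_le h1 h2
  omega

lemma cor_11 (K : ℕ) (f g : ℕ → ℚ) :
    ∑ i ∈ Icc 1 K, ∑ j ∈ Icc 1 K, ((min i j : ℕ) : ℚ) * (f i * g j)
      = ∑ l ∈ Icc 1 K, (∑ i ∈ Icc l K, f i) * (∑ j ∈ Icc l K, g j) := by
  have h := min_double_sum 1 1 K one_pos one_pos f g
  simp only [one_mul, Nat.div_one] at h
  calc ∑ i ∈ Icc 1 K, ∑ j ∈ Icc 1 K, ((min i j : ℕ) : ℚ) * (f i * g j)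
      = ∑ i ∈ Icc 1 K, ∑ j ∈ Icc 1 K, ((min j i : ℕ) : ℚ) * f i * g j := by
        refine Finset.sum_congr rfl fun i _ => Finset.sum_congr rfl fun j _ => ?_
        rw [min_comm i j]; ring
    _ = ∑ l ∈ Icc 1 K, (∑ i ∈ Icc (l - 1 + 1) K, f i) * (∑ j ∈ Icc (l - 1 + 1) K, g j) := h
    _ = ∑ l ∈ Icc 1 K, (∑ i ∈ Icc l K, f i) * (∑ j ∈ Icc l K, g j) := by
        refine Finset.sum_congr rfl fun l hl => ?_
        have h1 : 1 ≤ l := (mem_Icc.mp hl).1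
        rw [Nat.sub_add_cancel h1]

lemma cor_1t (t0 k : ℕ) (ht0 : 0 < t0) (f g : ℕ → ℚ) :
    ∑ i ∈ Icc 1 k, ∑ j ∈ Icc 1 (t0 * k), ((min j (t0 * i) : ℕ) : ℚ) * (f i * g j)
      = ∑ p ∈ Icc 1 k, ∑ l ∈ Icc (t0 * (p - 1) + 1) (t0 * p),
          (∑ i ∈ Icc p k, f i) * (∑ j ∈ Icc l (t0 * k), g j) := by
  have h := min_double_sum 1 t0 k one_pos ht0 f g
  simp only [one_mul, Nat.div_one] at h
  calc ∑ i ∈ Icc 1 k, ∑ j ∈ Icc 1 (t0 * k), ((min j (t0 * i) : ℕ) : ℚ) * (f i * g j)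
      = ∑ i ∈ Icc 1 k, ∑ j ∈ Icc 1 (t0 * k), ((min j (t0 * i) : ℕ) : ℚ) * f i * g j := by
        refine Finset.sum_congr rfl fun i _ => Finset.sum_congr rfl fun j _ => ?_
        ring
    _ = ∑ l ∈ Icc 1 (t0 * k), (∑ i ∈ Icc ((l - 1) / t0 + 1) k, f i)
          * (∑ j ∈ Icc (l - 1 + 1) (t0 * k), g j) := h
    _ = ∑ p ∈ Icc 1 k, ∑ l ∈ Icc (t0 * (p - 1) + 1) (t0 * p),
          (∑ i ∈ Icc ((l - 1) / t0 + 1) k, f i) * (∑ j ∈ Icc (l - 1 + 1) (t0 * k), g j) :=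
        sum_blocks t0 k _
    _ = ∑ p ∈ Icc 1 k, ∑ l ∈ Icc (t0 * (p - 1) + 1) (t0 * p),
          (∑ i ∈ Icc p k, f i) * (∑ j ∈ Icc l (t0 * k), g j) := by
        refine Finset.sum_congr rfl fun p hp => Finset.sum_congr rfl fun l hl => ?_
        have hp1 : 1 ≤ p := (mem_Icc.mp hp).1
        have hl1 : t0 * (p - 1) + 1 ≤ l := (mem_Icc.mp hl).1
        rw [div_in_block t0 p l hp1 hl, Nat.sub_add_cancel (by omega)]

lemma cor_t1 (t0 k : ℕ) (ht0 : 0 < t0) (f g : ℕ → ℚ) :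
    ∑ i ∈ Icc 1 (t0 * k), ∑ j ∈ Icc 1 k, ((min (t0 * j) i : ℕ) : ℚ) * (f i * g j)
      = ∑ p ∈ Icc 1 k, ∑ l ∈ Icc (t0 * (p - 1) + 1) (t0 * p),
          (∑ i ∈ Icc l (t0 * k), f i) * (∑ j ∈ Icc p k, g j) := by
  have h := min_double_sum t0 1 k ht0 one_pos f g
  simp only [one_mul, Nat.div_one] at h
  calc ∑ i ∈ Icc 1 (t0 * k), ∑ j ∈ Icc 1 k, ((min (t0 * j) i : ℕ) : ℚ) * (f i * g j)
      = ∑ i ∈ Icc 1 (t0 * k), ∑ j ∈ Icc 1 k, ((min (t0 * j) i : ℕ) : ℚ) * f i * g j := by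
        refine Finset.sum_congr rfl fun i _ => Finset.sum_congr rfl fun j _ => ?_
        ring
    _ = ∑ l ∈ Icc 1 (t0 * k), (∑ i ∈ Icc (l - 1 + 1) (t0 * k), f i)
          * (∑ j ∈ Icc ((l - 1) / t0 + 1) k, g j) := h
    _ = ∑ p ∈ Icc 1 k, ∑ l ∈ Icc (t0 * (p - 1) + 1) (t0 * p),
          (∑ i ∈ Icc (l - 1 + 1) (t0 * k), f i) * (∑ j ∈ Icc ((l - 1) / t0 + 1) k, g j) :=
        sum_blocks t0 k _
    _ = ∑ p ∈ Icc 1 k, ∑ l ∈ Icc (t0 * (p - 1) + 1) (t0 * p),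
          (∑ i ∈ Icc l (t0 * k), f i) * (∑ j ∈ Icc p k, g j) := by
        refine Finset.sum_congr rfl fun p hp => Finset.sum_congr rfl fun l hl => ?_
        have hp1 : 1 ≤ p := (mem_Icc.mp hp).1
        have hl1 : t0 * (p - 1) + 1 ≤ l := (mem_Icc.mp hl).1
        rw [div_in_block t0 p l hp1 hl, Nat.sub_add_cancel (by omega)]

lemma cor_tt (t0 k : ℕ) (f g : ℕ → ℚ) :
    ∑ i ∈ Icc 1 (t0 * k), ∑ j ∈ Icc 1 (t0 * k), ((min (t0 * j) (t0 * i) : ℕ) : ℚ) * (f i * g j)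
      = (t0 : ℚ) * ∑ p ∈ Icc 1 k, ∑ l ∈ Icc (t0 * (p - 1) + 1) (t0 * p),
          (∑ i ∈ Icc l (t0 * k), f i) * (∑ j ∈ Icc l (t0 * k), g j) := by
  calc ∑ i ∈ Icc 1 (t0 * k), ∑ j ∈ Icc 1 (t0 * k),
        ((min (t0 * j) (t0 * i) : ℕ) : ℚ) * (f i * g j)
      = ∑ i ∈ Icc 1 (t0 * k), ∑ j ∈ Icc 1 (t0 * k),
          (t0 : ℚ) * (((min i j : ℕ) : ℚ) * (f i * g j)) := by
        refine Finset.sum_congr rfl fun i _ => Finset.sum_congr rfl fun j _ => ?_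
        rw [min_mul_mul_left t0 j i, min_comm j i]
        push_cast
        ring
    _ = (t0 : ℚ) * ∑ i ∈ Icc 1 (t0 * k), ∑ j ∈ Icc 1 (t0 * k),
          ((min i j : ℕ) : ℚ) * (f i * g j) := by
        simp only [Finset.mul_sum]
    _ = (t0 : ℚ) * ∑ l ∈ Icc 1 (t0 * k),
          (∑ i ∈ Icc l (t0 * k), f i) * (∑ j ∈ Icc l (t0 * k), g j) := by
        rw [cor_11]
    _ = (t0 : ℚ) * ∑ p ∈ Icc 1 k, ∑ l ∈ Icc (t0 * (p - 1) + 1) (t0 * p),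
          (∑ i ∈ Icc l (t0 * k), f i) * (∑ j ∈ Icc l (t0 * k), g j) := by
        rw [sum_blocks]

lemma swap3 {X Y : Type*} (s : Finset X) (u : Finset Y) (v : Finset ℕ) (F : X → Y → ℕ → ℚ) :
    ∑ x ∈ s, ∑ y ∈ u, ∑ l ∈ v, F x y l = ∑ l ∈ v, ∑ x ∈ s, ∑ y ∈ u, F x y l :=
  calc ∑ x ∈ s, ∑ y ∈ u, ∑ l ∈ v, F x y l
      = ∑ x ∈ s, ∑ l ∈ v, ∑ y ∈ u, F x y l :=
        Finset.sum_congr rfl fun _ _ => Finset.sum_comm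
    _ = ∑ l ∈ v, ∑ x ∈ s, ∑ y ∈ u, F x y l := Finset.sum_comm

/-- The telescoped form of the restricted quadratic form `Q_k(m,n)` (last display of
the proof of Lemma 4.2 of the paper), for non-simply laced Cartan data. -/
theorem Qk_telescoped
    (r : ℕ) (C : Fin r → Fin r → ℤ) (t : Fin r → ℕ)
    (hdiag : ∀ α, C α α = 2)
    (hoff : ∀ α β, α ≠ β → C α β ≤ 0)
    (hzero : ∀ α β, C α β = 0 ↔ C β α = 0)
    (htpos : ∀ α, 0 < t α)
    (htone : ∃ α, t α = 1)
    (hsym : ∀ α β, (t β : ℤ) * C α β = (t α : ℤ) * C β α)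
    (hposdef : ∀ v : Fin r → ℚ, v ≠ 0 →
      0 < ∑ α, ∑ β, v α * ((C α β : ℚ) / (t α : ℚ)) * v β)
    (hconn : (SimpleGraph.fromRel fun α β => C α β ≠ 0).Connected)
    (t0 : ℕ) (ht0 : 1 < t0) (htval : ∀ α, t α = 1 ∨ t α = t0) (ht0ex : ∃ α, t α = t0)
    (k : ℕ) (hk : 0 < k) (m n : Fin r → ℕ → ℕ) :
    Qk r C t k m n = (1 / 2) * ∑ j ∈ Icc 1 k,
      ((∑ a ∈ univ.filter (fun a => t a = 1), tailSum r t k m a j *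
          ((∑ b ∈ univ.filter (fun b => t b = 1), (C a b : ℚ) * tailSum r t k m b j)
            - 2 * tailSum r t k n a j))
        + ∑ i ∈ Icc (t0 * (j - 1) + 1) (t0 * j),
            ((∑ a ∈ univ.filter (fun a => t a = t0), tailSum r t k m a i *
                ((∑ b ∈ univ.filter (fun b => t b = t0), (C a b : ℚ) * tailSum r t k m b i)
                  - 2 * tailSum r t k n a i))
              + 2 * ∑ a ∈ univ.filter (fun a => t a = 1),
                  ∑ b ∈ univ.filter (fun b => t b = t0),
                    tailSum r t k m a j * (C a b : ℚ) * tailSum r t k m b i)) := by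
  classical
  have ht0p : 0 < t0 := by omega
  have ht0Q : ((t0 : ℕ) : ℚ) ≠ 0 := by
    exact_mod_cast ht0p.ne'
  have hsplit : ∀ F : Fin r → ℚ, ∑ a, F a
      = ∑ a ∈ univ.filter (fun a => t a = 1), F a
        + ∑ a ∈ univ.filter (fun a => t a = t0), F a := by
    intro F
    have hset : univ.filter (fun a : Fin r => ¬ t a = 1)
        = univ.filter (fun a : Fin r => t a = t0) := by
      ext a
      simp only [mem_filter, mem_univ, true_and]
      have := htval a
      omega
    rw [← Finset.sum_filter_add_sum_filter_not univ (fun a => t a = 1) F, hset]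
  have tail1 : ∀ (f : Fin r → ℕ → ℕ) (a : Fin r), t a = 1 →
      ∀ i, tailSum r t k f a i = ∑ j ∈ Icc i k, (f a j : ℚ) := by
    intro f a h i
    unfold tailSum
    rw [h, one_mul]
  have tailt : ∀ (f : Fin r → ℕ → ℕ) (a : Fin r), t a = t0 →
      ∀ i, tailSum r t k f a i = ∑ j ∈ Icc i (t0 * k), (f a j : ℚ) := by
    intro f a h i
    unfold tailSum
    rw [h]
  -- quadratic part, per-pair evaluations
  have keyOO : ∀ a ∈ univ.filter (fun a => t a = 1), ∀ b ∈ univ.filter (fun b => t b = 1),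
      (∑ i ∈ Icc 1 (t a * k), ∑ j ∈ Icc 1 (t b * k),
        (C a b : ℚ) / (t a : ℚ) * ((min (t a * j) (t b * i) : ℕ) : ℚ)
          * (m a i : ℚ) * (m b j : ℚ))
      = ∑ j ∈ Icc 1 k, (C a b : ℚ) * (tailSum r t k m a j * tailSum r t k m b j) := by
    intro a ha b hb
    have ta : t a = 1 := (mem_filter.mp ha).2
    have tb : t b = 1 := (mem_filter.mp hb).2
    rw [ta, tb]
    calc ∑ i ∈ Icc 1 (1 * k), ∑ j ∈ Icc 1 (1 * k),
          (C a b : ℚ) / ((1 : ℕ) : ℚ) * ((min (1 * j) (1 * i) : ℕ) : ℚ)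
            * (m a i : ℚ) * (m b j : ℚ)
        = (C a b : ℚ) * ∑ i ∈ Icc 1 k, ∑ j ∈ Icc 1 k,
            ((min i j : ℕ) : ℚ) * ((m a i : ℚ) * (m b j : ℚ)) := by
          rw [one_mul]
          simp only [Finset.mul_sum]
          refine Finset.sum_congr rfl fun i _ => Finset.sum_congr rfl fun j _ => ?_
          rw [one_mul, one_mul, min_comm j i]
          push_cast
          ring
      _ = (C a b : ℚ) * ∑ l ∈ Icc 1 k,
            (∑ i ∈ Icc l k, (m a i : ℚ)) * (∑ j ∈ Icc l k, (m b j : ℚ)) := by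
          rw [cor_11]
      _ = ∑ j ∈ Icc 1 k, (C a b : ℚ) * (tailSum r t k m a j * tailSum r t k m b j) := by
          rw [Finset.mul_sum]
          refine Finset.sum_congr rfl fun l _ => ?_
          rw [tail1 m a ta l, tail1 m b tb l]
  have keyOB : ∀ a ∈ univ.filter (fun a => t a = 1), ∀ b ∈ univ.filter (fun b => t b = t0),
      (∑ i ∈ Icc 1 (t a * k), ∑ j ∈ Icc 1 (t b * k),
        (C a b : ℚ) / (t a : ℚ) * ((min (t a * j) (t b * i) : ℕ) : ℚ)
          * (m a i : ℚ) * (m b j : ℚ))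
      = ∑ j ∈ Icc 1 k, ∑ i ∈ Icc (t0 * (j - 1) + 1) (t0 * j),
          (C a b : ℚ) * (tailSum r t k m a j * tailSum r t k m b i) := by
    intro a ha b hb
    have ta : t a = 1 := (mem_filter.mp ha).2
    have tb : t b = t0 := (mem_filter.mp hb).2
    rw [ta, tb]
    calc ∑ i ∈ Icc 1 (1 * k), ∑ j ∈ Icc 1 (t0 * k),
          (C a b : ℚ) / ((1 : ℕ) : ℚ) * ((min (1 * j) (t0 * i) : ℕ) : ℚ)
            * (m a i : ℚ) * (m b j : ℚ)
        = (C a b : ℚ) * ∑ i ∈ Icc 1 k, ∑ j ∈ Icc 1 (t0 * k),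
            ((min j (t0 * i) : ℕ) : ℚ) * ((m a i : ℚ) * (m b j : ℚ)) := by
          rw [one_mul]
          simp only [Finset.mul_sum]
          refine Finset.sum_congr rfl fun i _ => Finset.sum_congr rfl fun j _ => ?_
          rw [one_mul]
          push_cast
          ring
      _ = (C a b : ℚ) * ∑ p ∈ Icc 1 k, ∑ l ∈ Icc (t0 * (p - 1) + 1) (t0 * p),
            (∑ i ∈ Icc p k, (m a i : ℚ)) * (∑ j ∈ Icc l (t0 * k), (m b j : ℚ)) := by
          rw [cor_1t t0 k ht0p]
      _ = ∑ j ∈ Icc 1 k, ∑ i ∈ Icc (t0 * (j - 1) + 1) (t0 * j),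
            (C a b : ℚ) * (tailSum r t k m a j * tailSum r t k m b i) := by
          rw [Finset.mul_sum]
          refine Finset.sum_congr rfl fun p _ => ?_
          rw [Finset.mul_sum]
          refine Finset.sum_congr rfl fun l _ => ?_
          rw [tail1 m a ta p, tailt m b tb l]
  have keyBO : ∀ a ∈ univ.filter (fun a => t a = t0), ∀ b ∈ univ.filter (fun b => t b = 1),
      (∑ i ∈ Icc 1 (t a * k), ∑ j ∈ Icc 1 (t b * k),
        (C a b : ℚ) / (t a : ℚ) * ((min (t a * j) (t b * i) : ℕ) : ℚ)
          * (m a i : ℚ) * (m b j : ℚ))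
      = ∑ j ∈ Icc 1 k, ∑ i ∈ Icc (t0 * (j - 1) + 1) (t0 * j),
          (C b a : ℚ) * (tailSum r t k m b j * tailSum r t k m a i) := by
    intro a ha b hb
    have ta : t a = t0 := (mem_filter.mp ha).2
    have tb : t b = 1 := (mem_filter.mp hb).2
    have hC : (C a b : ℚ) / ((t0 : ℕ) : ℚ) = (C b a : ℚ) := by
      have h := hsym a b
      rw [tb, ta] at h
      push_cast at h
      rw [one_mul] at h
      rw [div_eq_iff ht0Q]
      have h2 : (C a b : ℚ) = ((t0 : ℕ) : ℚ) * (C b a : ℚ) := by exact_mod_cast h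
      rw [h2]; ring
    rw [ta, tb]
    calc ∑ i ∈ Icc 1 (t0 * k), ∑ j ∈ Icc 1 (1 * k),
          (C a b : ℚ) / ((t0 : ℕ) : ℚ) * ((min (t0 * j) (1 * i) : ℕ) : ℚ)
            * (m a i : ℚ) * (m b j : ℚ)
        = (C a b : ℚ) / ((t0 : ℕ) : ℚ) * ∑ i ∈ Icc 1 (t0 * k), ∑ j ∈ Icc 1 k,
            ((min (t0 * j) i : ℕ) : ℚ) * ((m a i : ℚ) * (m b j : ℚ)) := by
          rw [one_mul]
          simp only [Finset.mul_sum]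
          refine Finset.sum_congr rfl fun i _ => Finset.sum_congr rfl fun j _ => ?_
          rw [one_mul]
          ring
      _ = (C a b : ℚ) / ((t0 : ℕ) : ℚ) * ∑ p ∈ Icc 1 k, ∑ l ∈ Icc (t0 * (p - 1) + 1) (t0 * p),
            (∑ i ∈ Icc l (t0 * k), (m a i : ℚ)) * (∑ j ∈ Icc p k, (m b j : ℚ)) := by
          rw [cor_t1 t0 k ht0p]
      _ = ∑ j ∈ Icc 1 k, ∑ i ∈ Icc (t0 * (j - 1) + 1) (t0 * j),
            (C b a : ℚ) * (tailSum r t k m b j * tailSum r t k m a i) := by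
          rw [hC, Finset.mul_sum]
          refine Finset.sum_congr rfl fun p _ => ?_
          rw [Finset.mul_sum]
          refine Finset.sum_congr rfl fun l _ => ?_
          rw [tailt m a ta l, tail1 m b tb p]
          ring
  have keyBB : ∀ a ∈ univ.filter (fun a => t a = t0), ∀ b ∈ univ.filter (fun b => t b = t0),
      (∑ i ∈ Icc 1 (t a * k), ∑ j ∈ Icc 1 (t b * k),
        (C a b : ℚ) / (t a : ℚ) * ((min (t a * j) (t b * i) : ℕ) : ℚ)
          * (m a i : ℚ) * (m b j : ℚ))
      = ∑ j ∈ Icc 1 k, ∑ i ∈ Icc (t0 * (j - 1) + 1) (t0 * j),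
          (C a b : ℚ) * (tailSum r t k m a i * tailSum r t k m b i) := by
    intro a ha b hb
    have ta : t a = t0 := (mem_filter.mp ha).2
    have tb : t b = t0 := (mem_filter.mp hb).2
    rw [ta, tb]
    calc ∑ i ∈ Icc 1 (t0 * k), ∑ j ∈ Icc 1 (t0 * k),
          (C a b : ℚ) / ((t0 : ℕ) : ℚ) * ((min (t0 * j) (t0 * i) : ℕ) : ℚ)
            * (m a i : ℚ) * (m b j : ℚ)
        = (C a b : ℚ) / ((t0 : ℕ) : ℚ) * ∑ i ∈ Icc 1 (t0 * k), ∑ j ∈ Icc 1 (t0 * k),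
            ((min (t0 * j) (t0 * i) : ℕ) : ℚ) * ((m a i : ℚ) * (m b j : ℚ)) := by
          simp only [Finset.mul_sum]
          refine Finset.sum_congr rfl fun i _ => Finset.sum_congr rfl fun j _ => ?_
          ring
      _ = (C a b : ℚ) / ((t0 : ℕ) : ℚ) * (((t0 : ℕ) : ℚ) *
            ∑ p ∈ Icc 1 k, ∑ l ∈ Icc (t0 * (p - 1) + 1) (t0 * p),
              (∑ i ∈ Icc l (t0 * k), (m a i : ℚ)) * (∑ j ∈ Icc l (t0 * k), (m b j : ℚ))) := by
          rw [cor_tt t0 k]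
      _ = (C a b : ℚ) *
            ∑ p ∈ Icc 1 k, ∑ l ∈ Icc (t0 * (p - 1) + 1) (t0 * p),
              (∑ i ∈ Icc l (t0 * k), (m a i : ℚ)) * (∑ j ∈ Icc l (t0 * k), (m b j : ℚ)) := by
          rw [← mul_assoc, div_mul_cancel₀ _ ht0Q]
      _ = ∑ j ∈ Icc 1 k, ∑ i ∈ Icc (t0 * (j - 1) + 1) (t0 * j),
            (C a b : ℚ) * (tailSum r t k m a i * tailSum r t k m b i) := by
          rw [Finset.mul_sum]
          refine Finset.sum_congr rfl fun p _ => ?_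
          rw [Finset.mul_sum]
          refine Finset.sum_congr rfl fun l _ => ?_
          rw [tailt m a ta l, tailt m b tb l]
  -- linear part, per-index evaluations
  have keyLinO : ∀ a ∈ univ.filter (fun a => t a = 1),
      (∑ i ∈ Icc 1 (t a * k), ∑ j ∈ Icc 1 (t a * k),
        ((min i j : ℕ) : ℚ) * (m a i : ℚ) * (n a j : ℚ))
      = ∑ j ∈ Icc 1 k, tailSum r t k m a j * tailSum r t k n a j := by
    intro a ha
    have ta : t a = 1 := (mem_filter.mp ha).2
    rw [ta]
    calc ∑ i ∈ Icc 1 (1 * k), ∑ j ∈ Icc 1 (1 * k),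
          ((min i j : ℕ) : ℚ) * (m a i : ℚ) * (n a j : ℚ)
        = ∑ i ∈ Icc 1 k, ∑ j ∈ Icc 1 k,
            ((min i j : ℕ) : ℚ) * ((m a i : ℚ) * (n a j : ℚ)) := by
          rw [one_mul]
          exact Finset.sum_congr rfl fun i _ => Finset.sum_congr rfl fun j _ => mul_assoc _ _ _
      _ = ∑ l ∈ Icc 1 k, (∑ i ∈ Icc l k, (m a i : ℚ)) * (∑ j ∈ Icc l k, (n a j : ℚ)) :=
          cor_11 k _ _
      _ = ∑ j ∈ Icc 1 k, tailSum r t k m a j * tailSum r t k n a j := by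
          refine Finset.sum_congr rfl fun l _ => ?_
          rw [tail1 m a ta l, tail1 n a ta l]
  have keyLinB : ∀ a ∈ univ.filter (fun a => t a = t0),
      (∑ i ∈ Icc 1 (t a * k), ∑ j ∈ Icc 1 (t a * k),
        ((min i j : ℕ) : ℚ) * (m a i : ℚ) * (n a j : ℚ))
      = ∑ j ∈ Icc 1 k, ∑ i ∈ Icc (t0 * (j - 1) + 1) (t0 * j),
          tailSum r t k m a i * tailSum r t k n a i := by
    intro a ha
    have ta : t a = t0 := (mem_filter.mp ha).2
    rw [ta]
    calc ∑ i ∈ Icc 1 (t0 * k), ∑ j ∈ Icc 1 (t0 * k),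
          ((min i j : ℕ) : ℚ) * (m a i : ℚ) * (n a j : ℚ)
        = ∑ i ∈ Icc 1 (t0 * k), ∑ j ∈ Icc 1 (t0 * k),
            ((min i j : ℕ) : ℚ) * ((m a i : ℚ) * (n a j : ℚ)) :=
          Finset.sum_congr rfl fun i _ => Finset.sum_congr rfl fun j _ => mul_assoc _ _ _
      _ = ∑ l ∈ Icc 1 (t0 * k), (∑ i ∈ Icc l (t0 * k), (m a i : ℚ))
            * (∑ j ∈ Icc l (t0 * k), (n a j : ℚ)) := cor_11 (t0 * k) _ _
      _ = ∑ p ∈ Icc 1 k, ∑ l ∈ Icc (t0 * (p - 1) + 1) (t0 * p),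
            (∑ i ∈ Icc l (t0 * k), (m a i : ℚ)) * (∑ j ∈ Icc l (t0 * k), (n a j : ℚ)) :=
          sum_blocks t0 k _
      _ = ∑ j ∈ Icc 1 k, ∑ i ∈ Icc (t0 * (j - 1) + 1) (t0 * j),
            tailSum r t k m a i * tailSum r t k n a i := by
          refine Finset.sum_congr rfl fun p _ => Finset.sum_congr rfl fun l _ => ?_
          rw [tailt m a ta l, tailt n a ta l]
  -- assemble the quadratic part
  have hA : (∑ α, ∑ β, ∑ i ∈ Icc 1 (t α * k), ∑ j ∈ Icc 1 (t β * k),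
      (C α β : ℚ) / (t α : ℚ) * ((min (t α * j) (t β * i) : ℕ) : ℚ)
        * (m α i : ℚ) * (m β j : ℚ))
      = ((∑ j ∈ Icc 1 k, ∑ a ∈ univ.filter (fun a => t a = 1),
            ∑ b ∈ univ.filter (fun b => t b = 1),
              (C a b : ℚ) * (tailSum r t k m a j * tailSum r t k m b j))
          + ∑ j ∈ Icc 1 k, ∑ i ∈ Icc (t0 * (j - 1) + 1) (t0 * j),
              ∑ a ∈ univ.filter (fun a => t a = 1), ∑ b ∈ univ.filter (fun b => t b = t0),
                (C a b : ℚ) * (tailSum r t k m a j * tailSum r t k m b i))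
        + ((∑ j ∈ Icc 1 k, ∑ i ∈ Icc (t0 * (j - 1) + 1) (t0 * j),
              ∑ a ∈ univ.filter (fun a => t a = 1), ∑ b ∈ univ.filter (fun b => t b = t0),
                (C a b : ℚ) * (tailSum r t k m a j * tailSum r t k m b i))
          + ∑ j ∈ Icc 1 k, ∑ i ∈ Icc (t0 * (j - 1) + 1) (t0 * j),
              ∑ a ∈ univ.filter (fun a => t a = t0), ∑ b ∈ univ.filter (fun b => t b = t0),
                (C a b : ℚ) * (tailSum r t k m a i * tailSum r t k m b i)) := by
    rw [hsplit]
    congr 1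
    · calc ∑ a ∈ univ.filter (fun a => t a = 1), ∑ β,
            ∑ i ∈ Icc 1 (t a * k), ∑ j ∈ Icc 1 (t β * k),
              (C a β : ℚ) / (t a : ℚ) * ((min (t a * j) (t β * i) : ℕ) : ℚ)
                * (m a i : ℚ) * (m β j : ℚ)
          = ∑ a ∈ univ.filter (fun a => t a = 1),
              ((∑ b ∈ univ.filter (fun b => t b = 1),
                ∑ i ∈ Icc 1 (t a * k), ∑ j ∈ Icc 1 (t b * k),
                  (C a b : ℚ) / (t a : ℚ) * ((min (t a * j) (t b * i) : ℕ) : ℚ)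
                    * (m a i : ℚ) * (m b j : ℚ))
              + ∑ b ∈ univ.filter (fun b => t b = t0),
                ∑ i ∈ Icc 1 (t a * k), ∑ j ∈ Icc 1 (t b * k),
                  (C a b : ℚ) / (t a : ℚ) * ((min (t a * j) (t b * i) : ℕ) : ℚ)
                    * (m a i : ℚ) * (m b j : ℚ)) :=
            Finset.sum_congr rfl fun a _ => hsplit _
        _ = (∑ a ∈ univ.filter (fun a => t a = 1), ∑ b ∈ univ.filter (fun b => t b = 1),
              ∑ i ∈ Icc 1 (t a * k), ∑ j ∈ Icc 1 (t b * k),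
                (C a b : ℚ) / (t a : ℚ) * ((min (t a * j) (t b * i) : ℕ) : ℚ)
                  * (m a i : ℚ) * (m b j : ℚ))
            + ∑ a ∈ univ.filter (fun a => t a = 1), ∑ b ∈ univ.filter (fun b => t b = t0),
              ∑ i ∈ Icc 1 (t a * k), ∑ j ∈ Icc 1 (t b * k),
                (C a b : ℚ) / (t a : ℚ) * ((min (t a * j) (t b * i) : ℕ) : ℚ)
                  * (m a i : ℚ) * (m b j : ℚ) := Finset.sum_add_distrib
        _ = (∑ a ∈ univ.filter (fun a => t a = 1), ∑ b ∈ univ.filter (fun b => t b = 1),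
              ∑ j ∈ Icc 1 k, (C a b : ℚ) * (tailSum r t k m a j * tailSum r t k m b j))
            + ∑ a ∈ univ.filter (fun a => t a = 1), ∑ b ∈ univ.filter (fun b => t b = t0),
              ∑ j ∈ Icc 1 k, ∑ i ∈ Icc (t0 * (j - 1) + 1) (t0 * j),
                (C a b : ℚ) * (tailSum r t k m a j * tailSum r t k m b i) := by
            congr 1
            · exact Finset.sum_congr rfl fun a ha =>
                Finset.sum_congr rfl fun b hb => keyOO a ha b hb
            · exact Finset.sum_congr rfl fun a ha =>
                Finset.sum_congr rfl fun b hb => keyOB a ha b hb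
        _ = (∑ j ∈ Icc 1 k, ∑ a ∈ univ.filter (fun a => t a = 1),
              ∑ b ∈ univ.filter (fun b => t b = 1),
                (C a b : ℚ) * (tailSum r t k m a j * tailSum r t k m b j))
            + ∑ j ∈ Icc 1 k, ∑ i ∈ Icc (t0 * (j - 1) + 1) (t0 * j),
              ∑ a ∈ univ.filter (fun a => t a = 1), ∑ b ∈ univ.filter (fun b => t b = t0),
                (C a b : ℚ) * (tailSum r t k m a j * tailSum r t k m b i) := by
            congr 1
            · exact swap3 _ _ _ _
            · rw [swap3]
              exact Finset.sum_congr rfl fun j _ => swap3 _ _ _ _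
    · calc ∑ a ∈ univ.filter (fun a => t a = t0), ∑ β,
            ∑ i ∈ Icc 1 (t a * k), ∑ j ∈ Icc 1 (t β * k),
              (C a β : ℚ) / (t a : ℚ) * ((min (t a * j) (t β * i) : ℕ) : ℚ)
                * (m a i : ℚ) * (m β j : ℚ)
          = ∑ a ∈ univ.filter (fun a => t a = t0),
              ((∑ b ∈ univ.filter (fun b => t b = 1),
                ∑ i ∈ Icc 1 (t a * k), ∑ j ∈ Icc 1 (t b * k),
                  (C a b : ℚ) / (t a : ℚ) * ((min (t a * j) (t b * i) : ℕ) : ℚ)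
                    * (m a i : ℚ) * (m b j : ℚ))
              + ∑ b ∈ univ.filter (fun b => t b = t0),
                ∑ i ∈ Icc 1 (t a * k), ∑ j ∈ Icc 1 (t b * k),
                  (C a b : ℚ) / (t a : ℚ) * ((min (t a * j) (t b * i) : ℕ) : ℚ)
                    * (m a i : ℚ) * (m b j : ℚ)) :=
            Finset.sum_congr rfl fun a _ => hsplit _
        _ = (∑ a ∈ univ.filter (fun a => t a = t0), ∑ b ∈ univ.filter (fun b => t b = 1),
              ∑ i ∈ Icc 1 (t a * k), ∑ j ∈ Icc 1 (t b * k),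
                (C a b : ℚ) / (t a : ℚ) * ((min (t a * j) (t b * i) : ℕ) : ℚ)
                  * (m a i : ℚ) * (m b j : ℚ))
            + ∑ a ∈ univ.filter (fun a => t a = t0), ∑ b ∈ univ.filter (fun b => t b = t0),
              ∑ i ∈ Icc 1 (t a * k), ∑ j ∈ Icc 1 (t b * k),
                (C a b : ℚ) / (t a : ℚ) * ((min (t a * j) (t b * i) : ℕ) : ℚ)
                  * (m a i : ℚ) * (m b j : ℚ) := Finset.sum_add_distrib
        _ = (∑ a ∈ univ.filter (fun a => t a = t0), ∑ b ∈ univ.filter (fun b => t b = 1),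
              ∑ j ∈ Icc 1 k, ∑ i ∈ Icc (t0 * (j - 1) + 1) (t0 * j),
                (C b a : ℚ) * (tailSum r t k m b j * tailSum r t k m a i))
            + ∑ a ∈ univ.filter (fun a => t a = t0), ∑ b ∈ univ.filter (fun b => t b = t0),
              ∑ j ∈ Icc 1 k, ∑ i ∈ Icc (t0 * (j - 1) + 1) (t0 * j),
                (C a b : ℚ) * (tailSum r t k m a i * tailSum r t k m b i) := by
            congr 1
            · exact Finset.sum_congr rfl fun a ha =>
                Finset.sum_congr rfl fun b hb => keyBO a ha b hb
            · exact Finset.sum_congr rfl fun a ha =>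
                Finset.sum_congr rfl fun b hb => keyBB a ha b hb
        _ = (∑ a ∈ univ.filter (fun a => t a = 1), ∑ b ∈ univ.filter (fun b => t b = t0),
              ∑ j ∈ Icc 1 k, ∑ i ∈ Icc (t0 * (j - 1) + 1) (t0 * j),
                (C a b : ℚ) * (tailSum r t k m a j * tailSum r t k m b i))
            + ∑ a ∈ univ.filter (fun a => t a = t0), ∑ b ∈ univ.filter (fun b => t b = t0),
              ∑ j ∈ Icc 1 k, ∑ i ∈ Icc (t0 * (j - 1) + 1) (t0 * j),
                (C a b : ℚ) * (tailSum r t k m a i * tailSum r t k m b i) := by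
            congr 1
            exact Finset.sum_comm
        _ = (∑ j ∈ Icc 1 k, ∑ i ∈ Icc (t0 * (j - 1) + 1) (t0 * j),
              ∑ a ∈ univ.filter (fun a => t a = 1), ∑ b ∈ univ.filter (fun b => t b = t0),
                (C a b : ℚ) * (tailSum r t k m a j * tailSum r t k m b i))
            + ∑ j ∈ Icc 1 k, ∑ i ∈ Icc (t0 * (j - 1) + 1) (t0 * j),
              ∑ a ∈ univ.filter (fun a => t a = t0), ∑ b ∈ univ.filter (fun b => t b = t0),
                (C a b : ℚ) * (tailSum r t k m a i * tailSum r t k m b i) := by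
            congr 1
            · rw [swap3]
              exact Finset.sum_congr rfl fun j _ => swap3 _ _ _ _
            · rw [swap3]
              exact Finset.sum_congr rfl fun j _ => swap3 _ _ _ _
  -- assemble the linear part
  have hLin : (∑ α, ∑ i ∈ Icc 1 (t α * k), ∑ j ∈ Icc 1 (t α * k),
      ((min i j : ℕ) : ℚ) * (m α i : ℚ) * (n α j : ℚ))
      = (∑ j ∈ Icc 1 k, ∑ a ∈ univ.filter (fun a => t a = 1),
          tailSum r t k m a j * tailSum r t k n a j)
        + ∑ j ∈ Icc 1 k, ∑ i ∈ Icc (t0 * (j - 1) + 1) (t0 * j),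
            ∑ a ∈ univ.filter (fun a => t a = t0),
              tailSum r t k m a i * tailSum r t k n a i := by
    rw [hsplit]
    congr 1
    · calc ∑ a ∈ univ.filter (fun a => t a = 1),
            ∑ i ∈ Icc 1 (t a * k), ∑ j ∈ Icc 1 (t a * k),
              ((min i j : ℕ) : ℚ) * (m a i : ℚ) * (n a j : ℚ)
          = ∑ a ∈ univ.filter (fun a => t a = 1), ∑ j ∈ Icc 1 k,
              tailSum r t k m a j * tailSum r t k n a j :=
            Finset.sum_congr rfl keyLinO
        _ = ∑ j ∈ Icc 1 k, ∑ a ∈ univ.filter (fun a => t a = 1),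
              tailSum r t k m a j * tailSum r t k n a j := Finset.sum_comm
    · calc ∑ a ∈ univ.filter (fun a => t a = t0),
            ∑ i ∈ Icc 1 (t a * k), ∑ j ∈ Icc 1 (t a * k),
              ((min i j : ℕ) : ℚ) * (m a i : ℚ) * (n a j : ℚ)
          = ∑ a ∈ univ.filter (fun a => t a = t0), ∑ j ∈ Icc 1 k,
              ∑ i ∈ Icc (t0 * (j - 1) + 1) (t0 * j),
                tailSum r t k m a i * tailSum r t k n a i :=
            Finset.sum_congr rfl keyLinB
        _ = ∑ j ∈ Icc 1 k, ∑ a ∈ univ.filter (fun a => t a = t0),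
              ∑ i ∈ Icc (t0 * (j - 1) + 1) (t0 * j),
                tailSum r t k m a i * tailSum r t k n a i := Finset.sum_comm
        _ = ∑ j ∈ Icc 1 k, ∑ i ∈ Icc (t0 * (j - 1) + 1) (t0 * j),
              ∑ a ∈ univ.filter (fun a => t a = t0),
                tailSum r t k m a i * tailSum r t k n a i :=
          Finset.sum_congr rfl fun j _ => Finset.sum_comm
  -- rewrite the target summand
  have hbig : ∀ j ∈ Icc 1 k,
      ((∑ a ∈ univ.filter (fun a => t a = 1), tailSum r t k m a j *
          ((∑ b ∈ univ.filter (fun b => t b = 1), (C a b : ℚ) * tailSum r t k m b j)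
            - 2 * tailSum r t k n a j))
        + ∑ i ∈ Icc (t0 * (j - 1) + 1) (t0 * j),
            ((∑ a ∈ univ.filter (fun a => t a = t0), tailSum r t k m a i *
                ((∑ b ∈ univ.filter (fun b => t b = t0), (C a b : ℚ) * tailSum r t k m b i)
                  - 2 * tailSum r t k n a i))
              + 2 * ∑ a ∈ univ.filter (fun a => t a = 1),
                  ∑ b ∈ univ.filter (fun b => t b = t0),
                    tailSum r t k m a j * (C a b : ℚ) * tailSum r t k m b i))
      = (((∑ a ∈ univ.filter (fun a => t a = 1), ∑ b ∈ univ.filter (fun b => t b = 1),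
            (C a b : ℚ) * (tailSum r t k m a j * tailSum r t k m b j))
          - 2 * ∑ a ∈ univ.filter (fun a => t a = 1),
              tailSum r t k m a j * tailSum r t k n a j)
        + ∑ i ∈ Icc (t0 * (j - 1) + 1) (t0 * j),
            (((∑ a ∈ univ.filter (fun a => t a = t0), ∑ b ∈ univ.filter (fun b => t b = t0),
                (C a b : ℚ) * (tailSum r t k m a i * tailSum r t k m b i))
              - 2 * ∑ a ∈ univ.filter (fun a => t a = t0),
                  tailSum r t k m a i * tailSum r t k n a i)
            + 2 * ∑ a ∈ univ.filter (fun a => t a = 1),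
                ∑ b ∈ univ.filter (fun b => t b = t0),
                  (C a b : ℚ) * (tailSum r t k m a j * tailSum r t k m b i))) := by
    intro j _
    congr 1
    · calc ∑ a ∈ univ.filter (fun a => t a = 1), tailSum r t k m a j *
            ((∑ b ∈ univ.filter (fun b => t b = 1), (C a b : ℚ) * tailSum r t k m b j)
              - 2 * tailSum r t k n a j)
          = ∑ a ∈ univ.filter (fun a => t a = 1),
              ((∑ b ∈ univ.filter (fun b => t b = 1),
                  (C a b : ℚ) * (tailSum r t k m a j * tailSum r t k m b j))
                - 2 * (tailSum r t k m a j * tailSum r t k n a j)) := by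
            refine Finset.sum_congr rfl fun a _ => ?_
            rw [mul_sub, Finset.mul_sum]
            congr 1
            · exact Finset.sum_congr rfl fun b _ => by ring
            · ring
        _ = _ := by
            rw [Finset.sum_sub_distrib, ← Finset.mul_sum]
    · refine Finset.sum_congr rfl fun i _ => ?_
      congr 1
      · calc ∑ a ∈ univ.filter (fun a => t a = t0), tailSum r t k m a i *
              ((∑ b ∈ univ.filter (fun b => t b = t0), (C a b : ℚ) * tailSum r t k m b i)
                - 2 * tailSum r t k n a i)
            = ∑ a ∈ univ.filter (fun a => t a = t0),
                ((∑ b ∈ univ.filter (fun b => t b = t0),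
                    (C a b : ℚ) * (tailSum r t k m a i * tailSum r t k m b i))
                  - 2 * (tailSum r t k m a i * tailSum r t k n a i)) := by
              refine Finset.sum_congr rfl fun a _ => ?_
              rw [mul_sub, Finset.mul_sum]
              congr 1
              · exact Finset.sum_congr rfl fun b _ => by ring
              · ring
          _ = _ := by
              rw [Finset.sum_sub_distrib, ← Finset.mul_sum]
      · congr 1
        exact Finset.sum_congr rfl fun a _ => Finset.sum_congr rfl fun b _ => by ring
  -- conclude
  unfold Qk
  rw [hA, hLin, Finset.sum_congr rfl hbig]
  simp only [Finset.sum_add_distrib, Finset.sum_sub_distrib, ← Finset.mul_sum]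
  ring
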